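/- arXiv:1406.7434 — 2 statements merged into one kernel-verified Lean document; each statement's English description precedes it below -/
import Mathlib

section
/- Fix an integer k ≥ 1 and let φ(s) = H_k'(H_k^{-1}(s)) H_k^{-1}(s). Then as h ↓ 0, φ(h) = k h (1 + o(1)); that is, lim_{h→0+} φ(h)/(k h) = 1. -/
/-!
Bounding `e^{-t}` between `e^{-x}` and `1` on `[0, x]` gives
`e^{-x} x^k/k! ≤ H_k(x) ≤ x^k/k!`, while `x H_k'(x) = k e^{-x} x^k/k!`. Hence
`x H_k'(x) / (k H_k(x))` is squeezed between `e^{-x}` and `1` and tends to `1` as `x → 0+`.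
Since `H_k` is monotone and positive on `(0, ∞)`, `H_k^{-1}(h) → 0+` as `h → 0+`, and
substituting `x = H_k^{-1}(h)` gives the claim.
-/

open Real MeasureTheory Filter Set

/-- CDF of the Gamma(k,1) distribution with integer shape `k ≥ 1`. -/
noncomputable def Hgamma (k : ℕ) (x : ℝ) : ℝ :=
  ∫ t in (0:ℝ)..x, t ^ (k - 1) * Real.exp (-t) / (Nat.factorial (k - 1) : ℝ)

/-- Density of the Gamma(k,1) distribution. -/
noncomputable def Hpdf (k : ℕ) (x : ℝ) : ℝ :=
  x ^ (k - 1) * Real.exp (-x) / (Nat.factorial (k - 1) : ℝ)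

open Topology

theorem tendsto_nhdsGT_zero_of_eventually_leftInverse {F G : ℝ → ℝ}
    (hF : MonotoneOn F (Ioi 0)) (hF_pos : ∀ x, 0 < x → 0 < F x)
    (hG : ∀ᶠ s in 𝓝[>] 0, F (G s) = s ∧ 0 < G s) :
    Tendsto G (𝓝[>] 0) (𝓝[>] 0) := by
  refine (nhdsGT_basis 0).tendsto_right_iff.2 fun a ha => ?_
  filter_upwards [hG, Ioo_mem_nhdsGT (hF_pos a ha)] with s ⟨hFG, hGpos⟩ hs
  refine ⟨hGpos, lt_of_not_ge fun hle => ?_⟩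
  have := hF ha hGpos hle
  rw [hFG] at this
  exact hs.2.not_ge this

section

variable {k : ℕ} {x : ℝ}

theorem Hgamma_eq_integral_Hpdf (k : ℕ) (x : ℝ) : Hgamma k x = ∫ t in (0:ℝ)..x, Hpdf k t := rfl

theorem continuous_Hpdf (k : ℕ) : Continuous (Hpdf k) := by
  unfold Hpdf; fun_prop

theorem Hpdf_nonneg {t : ℝ} (ht : 0 ≤ t) : 0 ≤ Hpdf k t := by
  unfold Hpdf; positivity

theorem Hpdf_le {t : ℝ} (ht : 0 ≤ t) :
    Hpdf k t ≤ t ^ (k - 1) / (k - 1).factorial := by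
  unfold Hpdf
  gcongr
  exact mul_le_of_le_one_right (by positivity) (exp_le_one_iff.2 (by linarith))

theorem exp_neg_mul_le_Hpdf {t : ℝ} (ht : 0 ≤ t) (htx : t ≤ x) :
    exp (-x) * (t ^ (k - 1) / (k - 1).factorial) ≤ Hpdf k t := by
  unfold Hpdf
  rw [mul_div_assoc', mul_comm (exp (-x))]
  gcongr

theorem integral_pow_sub_one_div_factorial (hk : 1 ≤ k) (x : ℝ) :
    ∫ t in (0:ℝ)..x, t ^ (k - 1) / (k - 1).factorial = x ^ k / k.factorial := by
  obtain ⟨n, rfl⟩ := Nat.exists_eq_add_of_le' hk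
  rw [intervalIntegral.integral_div, integral_pow, Nat.factorial_succ]
  push_cast
  field_simp
  ring

theorem Hgamma_le_pow_div_factorial (hk : 1 ≤ k) (hx : 0 ≤ x) :
    Hgamma k x ≤ x ^ k / k.factorial := by
  rw [Hgamma_eq_integral_Hpdf, ← integral_pow_sub_one_div_factorial hk]
  refine intervalIntegral.integral_mono_on hx ((continuous_Hpdf k).intervalIntegrable _ _)
    ?_ fun t ht => Hpdf_le ht.1
  apply Continuous.intervalIntegrable; fun_prop

theorem exp_neg_mul_pow_div_factorial_le_Hgamma (hk : 1 ≤ k) (hx : 0 ≤ x) :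
    exp (-x) * (x ^ k / k.factorial) ≤ Hgamma k x := by
  rw [Hgamma_eq_integral_Hpdf, ← integral_pow_sub_one_div_factorial hk,
    ← intervalIntegral.integral_const_mul]
  refine intervalIntegral.integral_mono_on hx ?_ ((continuous_Hpdf k).intervalIntegrable _ _)
    fun t ht => exp_neg_mul_le_Hpdf ht.1 ht.2
  apply Continuous.intervalIntegrable; fun_prop

theorem Hgamma_pos (hk : 1 ≤ k) (hx : 0 < x) : 0 < Hgamma k x :=
  lt_of_lt_of_le (by positivity) (exp_neg_mul_pow_div_factorial_le_Hgamma hk hx.le)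

theorem Hgamma_monotoneOn (k : ℕ) : MonotoneOn (Hgamma k) (Ici 0) := by
  intro a ha b _ hab
  have hint := (continuous_Hpdf k).intervalIntegrable (μ := volume)
  rw [← sub_nonneg, Hgamma_eq_integral_Hpdf, Hgamma_eq_integral_Hpdf,
    intervalIntegral.integral_interval_sub_left (hint _ _) (hint _ _)]
  exact intervalIntegral.integral_nonneg hab fun t ht => Hpdf_nonneg (le_trans ha ht.1)

theorem Hpdf_mul_self (hk : 1 ≤ k) (x : ℝ) :
    Hpdf k x * x = k * (exp (-x) * (x ^ k / k.factorial)) := by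
  obtain ⟨n, rfl⟩ := Nat.exists_eq_add_of_le' hk
  unfold Hpdf
  rw [Nat.factorial_succ]
  push_cast
  field_simp
  ring

theorem Hpdf_mul_self_div_mul_Hgamma_eq (hk : 1 ≤ k) (x : ℝ) :
    Hpdf k x * x / (k * Hgamma k x) = exp (-x) * (x ^ k / k.factorial) / Hgamma k x := by
  rw [Hpdf_mul_self hk, mul_div_mul_left _ _ (by positivity : (k : ℝ) ≠ 0)]

theorem tendsto_Hpdf_mul_self_div_mul_Hgamma (hk : 1 ≤ k) :
    Tendsto (fun x => Hpdf k x * x / (k * Hgamma k x)) (𝓝[>] 0) (𝓝 1) := by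
  have hexp : Tendsto (fun x : ℝ => exp (-x)) (𝓝[>] 0) (𝓝 1) := by
    refine ((?_ : Continuous fun x : ℝ => exp (-x)).tendsto' 0 1 (by simp)).mono_left
      nhdsWithin_le_nhds
    fun_prop
  refine tendsto_of_tendsto_of_tendsto_of_le_of_le' hexp tendsto_const_nhds ?_ ?_
  all_goals
    filter_upwards [self_mem_nhdsWithin] with x (hx : 0 < x)
    rw [Hpdf_mul_self_div_mul_Hgamma_eq hk]
  · rw [le_div_iff₀ (Hgamma_pos hk hx)]
    exact mul_le_mul_of_nonneg_left (Hgamma_le_pow_div_factorial hk hx.le) (exp_pos _).le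
  · exact div_le_one_of_le₀ (exp_neg_mul_pow_div_factorial_le_Hgamma hk hx.le)
      (Hgamma_pos hk hx).le

end

theorem stmt13 (k : ℕ) (hk : 1 ≤ k) (Hinv : ℝ → ℝ)
    (hinv : ∀ s ∈ Set.Ioo (0:ℝ) 1, Hgamma k (Hinv s) = s ∧ 0 < Hinv s) :
    Filter.Tendsto (fun h => Hpdf k (Hinv h) * Hinv h / ((k : ℝ) * h))
      (nhdsWithin 0 (Set.Ioi 0)) (nhds 1) := by
  have hinv_ev : ∀ᶠ s in 𝓝[>] 0, Hgamma k (Hinv s) = s ∧ 0 < Hinv s :=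
    eventually_of_mem (Ioo_mem_nhdsGT one_pos) hinv
  have hlim := (tendsto_Hpdf_mul_self_div_mul_Hgamma hk).comp
    (tendsto_nhdsGT_zero_of_eventually_leftInverse
      ((Hgamma_monotoneOn k).mono Ioi_subset_Ici_self) (fun _ => Hgamma_pos hk) hinv_ev)
  refine hlim.congr' ?_
  filter_upwards [hinv_ev] with s hs
  simp only [Function.comp_apply, hs.1]
end

section
/- Fix an integer k ≥ 1 and let φ(s) = H_k'(H_k^{-1}(s)) H_k^{-1}(s). Then as h ↓ 0, φ(1−h) = h · log(1/h) · (1 + o(1)); that is, lim_{h→0+} φ(1−h)/(h log(1/h)) = 1. -/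
/-!
For `k = m + 1` the Gamma tail is `1 - H_k(x) = e^{-x} P_m(x)`, where `P_m` is the degree-`m`
Taylor polynomial of `exp`. Put `x = H_k^{-1}(1 - h)`, so `h = e^{-x} P_m(x)` and
`log (1/h) = x - log P_m(x)`. After cancelling `e^{-x}`, the ratio becomes
`(x^m / m!) / P_m(x) · x / (x - log P_m(x))`. Both factors tend to `1` as `x → ∞`, since
`P_m(x) ~ x^m / m!` and `log P_m(x) = O(log x)`. Finally `x ≥ log (1/h) → ∞` as `h → 0⁺`.
-/

open Real MeasureTheory Filter Set

open Topology Asymptotics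
open scoped Nat

noncomputable def expPartialSum (m : ℕ) (x : ℝ) : ℝ :=
  ∑ j ∈ Finset.range (m + 1), x ^ j / (j ! : ℝ)

lemma one_le_expPartialSum (m : ℕ) {x : ℝ} (hx : 0 ≤ x) : 1 ≤ expPartialSum m x := by
  rw [expPartialSum, Finset.sum_range_succ']
  simp only [pow_zero, Nat.factorial_zero, Nat.cast_one, div_one, le_add_iff_nonneg_left]
  exact Finset.sum_nonneg fun j _ => by positivity

lemma expPartialSum_pos (m : ℕ) {x : ℝ} (hx : 0 ≤ x) : 0 < expPartialSum m x :=
  one_pos.trans_le (one_le_expPartialSum m hx)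

lemma expPartialSum_le (m : ℕ) {x : ℝ} (hx : 1 ≤ x) : expPartialSum m x ≤ (m + 1) * x ^ m := by
  calc expPartialSum m x ≤ ∑ _j ∈ Finset.range (m + 1), x ^ m := by
        refine Finset.sum_le_sum fun j hj => ?_
        calc x ^ j / (j ! : ℝ) ≤ x ^ j := div_le_self (by positivity) (mod_cast j.factorial_pos)
          _ ≤ x ^ m := pow_le_pow_right₀ hx (Finset.mem_range_succ_iff.mp hj)
    _ = (m + 1) * x ^ m := by simp

lemma hasDerivAt_expPartialSum (m : ℕ) (x : ℝ) :
    HasDerivAt (expPartialSum m) (expPartialSum m x - x ^ m / (m ! : ℝ)) x := by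
  have hsum : HasDerivAt (expPartialSum m)
      (∑ j ∈ Finset.range (m + 1), (j : ℝ) * x ^ (j - 1) / (j ! : ℝ)) x := by
    unfold expPartialSum
    exact HasDerivAt.fun_sum fun j _ => (hasDerivAt_pow j x).div_const _
  convert hsum using 1
  rw [expPartialSum, Finset.sum_range_succ, add_sub_cancel_right, Finset.sum_range_succ']
  simp only [Nat.cast_zero, zero_mul, zero_div, add_zero, add_tsub_cancel_right]
  refine Finset.sum_congr rfl fun j _ => ?_
  rw [Nat.factorial_succ, Nat.cast_mul]
  field_simp

lemma hasDerivAt_exp_neg_mul_expPartialSum (m : ℕ) (x : ℝ) :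
    HasDerivAt (fun x => exp (-x) * expPartialSum m x) (-(x ^ m * exp (-x) / (m ! : ℝ))) x := by
  have hexp : HasDerivAt (fun x : ℝ => exp (-x)) (-exp (-x)) x := by
    simpa using (hasDerivAt_neg x).exp
  exact (hexp.fun_mul (hasDerivAt_expPartialSum m x)).congr_deriv (by ring)

lemma one_sub_Hgamma_succ (m : ℕ) (x : ℝ) :
    1 - Hgamma (m + 1) x = exp (-x) * expPartialSum m x := by
  have hderiv (t : ℝ) : HasDerivAt (fun x => -(exp (-x) * expPartialSum m x))
      (t ^ m * exp (-t) / (m ! : ℝ)) t := by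
    simpa using (hasDerivAt_exp_neg_mul_expPartialSum m t).fun_neg
  have hint : IntervalIntegrable (fun t : ℝ => t ^ m * exp (-t) / (m ! : ℝ)) volume 0 x := by
    apply Continuous.intervalIntegrable
    fun_prop
  rw [Hgamma, add_tsub_cancel_right,
    intervalIntegral.integral_eq_sub_of_hasDerivAt (fun t _ => hderiv t) hint]
  simp [expPartialSum, Finset.sum_range_succ']

lemma isEquivalent_expPartialSum (m : ℕ) :
    expPartialSum m ~[atTop] fun x => x ^ m / (m ! : ℝ) := by
  have hlower : (fun x : ℝ => ∑ j ∈ Finset.range m, x ^ j / (j ! : ℝ))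
      =o[atTop] fun x => x ^ m / (m ! : ℝ) := by
    refine IsLittleO.fun_sum fun j hj => ?_
    simpa only [div_eq_inv_mul] using
      ((isLittleO_pow_pow_atTop_of_lt (Finset.mem_range.mp hj)).const_mul_left (j ! : ℝ)⁻¹
        ).const_mul_right (c := (m ! : ℝ)⁻¹) (by positivity)
  refine (IsEquivalent.refl.add_isLittleO hlower).congr_left (Eventually.of_forall fun x => ?_)
  simp only [Pi.add_apply, expPartialSum, Finset.sum_range_succ, add_comm]

lemma isLittleO_log_expPartialSum (m : ℕ) :
    (fun x => log (expPartialSum m x)) =o[atTop] id := by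
  have hbound : (fun x => log (expPartialSum m x)) =O[atTop]
      fun x => log (m + 1) + m * log x := by
    refine IsBigO.of_bound 1 ?_
    filter_upwards [eventually_ge_atTop 1] with x hx
    have hP := one_le_expPartialSum m (zero_le_one.trans hx)
    rw [one_mul, norm_of_nonneg (log_nonneg hP), Real.norm_eq_abs]
    calc log (expPartialSum m x) ≤ log ((m + 1) * x ^ m) :=
          log_le_log (one_pos.trans_le hP) (expPartialSum_le m hx)
      _ = log (m + 1) + m * log x := by
          rw [log_mul (by positivity) (pow_pos (one_pos.trans_le hx) m).ne', Real.log_pow]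
      _ ≤ _ := le_abs_self _
  exact hbound.trans_isLittleO ((isLittleO_const_id_atTop _).add
    (isLittleO_log_id_atTop.const_mul_left _))

lemma tendsto_pow_succ_div_expPartialSum_mul (m : ℕ) :
    Tendsto (fun x => x ^ (m + 1) / (m ! : ℝ) /
      (expPartialSum m x * (x - log (expPartialSum m x)))) atTop (𝓝 1) := by
  have hlin : (fun x => x - log (expPartialSum m x)) ~[atTop] id :=
    IsEquivalent.refl.sub_isLittleO (isLittleO_log_expPartialSum m)
  have hequiv : (fun x => x ^ (m + 1) / (m ! : ℝ)) ~[atTop]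
      fun x => expPartialSum m x * (x - log (expPartialSum m x)) :=
    ((isEquivalent_expPartialSum m).symm.mul hlin.symm).congr_left
      (Eventually.of_forall fun x => by simp only [Pi.mul_apply, id]; ring)
  have hpos : ∀ᶠ x in atTop, 0 < expPartialSum m x * (x - log (expPartialSum m x)) :=
    (hequiv.tendsto_atTop ((tendsto_pow_atTop m.succ_ne_zero).atTop_div_const
      (by positivity))).eventually_gt_atTop 0
  exact (isEquivalent_iff_tendsto_one (hpos.mono fun x hx => hx.ne')).mp hequiv

lemma log_one_div_exp_neg_mul_expPartialSum (m : ℕ) {x : ℝ} (hx : 0 ≤ x) :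
    log (1 / (exp (-x) * expPartialSum m x)) = x - log (expPartialSum m x) := by
  rw [one_div, log_inv, log_mul (exp_ne_zero _) (expPartialSum_pos m hx).ne', log_exp]
  ring

lemma Hpdf_succ_mul_div_eq (m : ℕ) {x : ℝ} (hx : 0 ≤ x) :
    Hpdf (m + 1) x * x /
        (exp (-x) * expPartialSum m x * log (1 / (exp (-x) * expPartialSum m x))) =
      x ^ (m + 1) / (m ! : ℝ) / (expPartialSum m x * (x - log (expPartialSum m x))) := by
  have hpdf : Hpdf (m + 1) x * x = exp (-x) * (x ^ (m + 1) / (m ! : ℝ)) := by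
    rw [Hpdf, add_tsub_cancel_right]
    ring
  rw [log_one_div_exp_neg_mul_expPartialSum m hx, hpdf, mul_assoc,
    mul_div_mul_left _ _ (exp_ne_zero _)]

theorem stmt14 (k : ℕ) (hk : 1 ≤ k) (Hinv : ℝ → ℝ)
    (hinv : ∀ s ∈ Set.Ioo (0:ℝ) 1, Hgamma k (Hinv s) = s ∧ 0 < Hinv s) :
    Filter.Tendsto (fun h => Hpdf k (Hinv (1 - h)) * Hinv (1 - h) / (h * Real.log (1 / h)))
      (nhdsWithin 0 (Set.Ioi 0)) (nhds 1) := by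
  obtain ⟨m, rfl⟩ : ∃ m, k = m + 1 := ⟨k - 1, (Nat.sub_add_cancel hk).symm⟩
  have hsmall : ∀ᶠ h in 𝓝[>] (0 : ℝ), h ∈ Ioo (0 : ℝ) 1 := Ioo_mem_nhdsGT one_pos
  have htail (h : ℝ) (hh : h ∈ Ioo (0 : ℝ) 1) :
      exp (-Hinv (1 - h)) * expPartialSum m (Hinv (1 - h)) = h ∧ 0 ≤ Hinv (1 - h) := by
    obtain ⟨hH, hpos⟩ := hinv (1 - h) ⟨by linarith [hh.2], by linarith [hh.1]⟩
    exact ⟨by rw [← one_sub_Hgamma_succ, hH]; ring, hpos.le⟩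
  have hquantile : Tendsto (fun h => Hinv (1 - h)) (𝓝[>] 0) atTop := by
    refine tendsto_atTop_mono' _ ?_ (tendsto_log_atTop.comp tendsto_inv_nhdsGT_zero)
    filter_upwards [hsmall] with h hh
    obtain ⟨heq, hpos⟩ := htail h hh
    calc log h⁻¹ = Hinv (1 - h) - log (expPartialSum m (Hinv (1 - h))) := by
          rw [← one_div, ← log_one_div_exp_neg_mul_expPartialSum m hpos, heq]
      _ ≤ Hinv (1 - h) := sub_le_self _ (log_nonneg (one_le_expPartialSum m hpos))
  refine ((tendsto_pow_succ_div_expPartialSum_mul m).comp hquantile).congr' ?_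
  filter_upwards [hsmall] with h hh
  obtain ⟨heq, hpos⟩ := htail h hh
  rw [Function.comp_apply, ← Hpdf_succ_mul_div_eq m hpos, heq]
end
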